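/- Let S be a Boolean inverse semigroup and I an additive ideal of S. Define (a,b) ∈ ε_I iff there exists c ≤ a,b with a \ c ∈ I and b \ c ∈ I. Then ε_I is a congruence on S whose class of 0 is exactly I, and the quotient map S → S/ε_I is weakly meet preserving. -/

import Mathlib

/-- An inverse semigroup with zero: associative multiplication, unique
generalized inverses, and a multiplicatively absorbing zero. -/
structure InvSemigroupZero (S : Type*) [Mul S] [Inv S] [Zero S] : Prop where
  mul_assoc : ∀ a b c : S, a * b * c = a * (b * c)
  mul_inv_mul : ∀ a : S, a * a⁻¹ * a = a
  inv_mul_inv : ∀ a : S, a⁻¹ * a * a⁻¹ = a⁻¹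
  inv_unique : ∀ a t : S, a * t * a = a → t * a * t = t → t = a⁻¹
  zero_mul : ∀ a : S, 0 * a = 0
  mul_zero : ∀ a : S, a * 0 = 0

def IsIdem {S : Type*} [Mul S] (e : S) : Prop := e * e = e

/-- The natural partial order: `s ≤ t` iff `s = t e` for some idempotent `e`. -/
def natLe {S : Type*} [Mul S] (s t : S) : Prop := ∃ e : S, IsIdem e ∧ s = t * e

/-- `s` and `t` are compatible iff `s⁻¹ t` and `s t⁻¹` are idempotents. -/
def Compat {S : Type*} [Mul S] [Inv S] (s t : S) : Prop :=
  IsIdem (s⁻¹ * t) ∧ IsIdem (s * t⁻¹)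

/-- A Boolean inverse semigroup: an inverse semigroup with zero in which `⊔`
gives the join of any compatible pair, multiplication distributes over such
joins, and `\` gives relative complements (so the idempotents form a
generalized Boolean algebra). -/
structure BooleanInvSemigroup (S : Type*) [Mul S] [Inv S] [Zero S] [Max S] [SDiff S] :
    Prop where
  toInvSemigroupZero : InvSemigroupZero S
  le_sup_left : ∀ a b : S, Compat a b → natLe a (a ⊔ b)
  le_sup_right : ∀ a b : S, Compat a b → natLe b (a ⊔ b)
  sup_le : ∀ a b c : S, Compat a b → natLe a c → natLe b c → natLe (a ⊔ b) c
  mul_sup : ∀ a b c : S, Compat b c → a * (b ⊔ c) = (a * b) ⊔ (a * c)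
  sup_mul : ∀ a b c : S, Compat a b → (a ⊔ b) * c = (a * c) ⊔ (b * c)
  sdiff_le : ∀ a c : S, natLe c a → natLe (a \ c) a
  sdiff_orth : ∀ a c : S, natLe c a → c⁻¹ * (a \ c) = 0 ∧ c * (a \ c)⁻¹ = 0
  sup_sdiff : ∀ a c : S, natLe c a → c ⊔ (a \ c) = a

def dd {S : Type*} [Mul S] [Inv S] (a : S) : S := a⁻¹ * a
def rr {S : Type*} [Mul S] [Inv S] (a : S) : S := a * a⁻¹

/-- The (left) skew difference `a ⊖ b = f a e` where `e = d(a) \ d(a)d(b)` and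
`f = r(b) \ r(a)r(b)`. -/
def skewDiff {S : Type*} [Mul S] [Inv S] [SDiff S] (a b : S) : S :=
  (rr b \ (rr a * rr b)) * a * (dd a \ (dd a * dd b))

/-- The (left) skew join `a ▽ b = (a ⊖ b) ∨ b`. -/
def skewJoin {S : Type*} [Mul S] [Inv S] [SDiff S] [Max S] (a b : S) : S :=
  skewDiff a b ⊔ b

/-- An additive ideal: a nonempty two-sided semigroup ideal closed under
binary compatible joins. -/
def AddIdeal {S : Type*} [Mul S] [Inv S] [Max S] (I : Set S) : Prop :=
  I.Nonempty ∧ (∀ a ∈ I, ∀ s : S, s * a ∈ I ∧ a * s ∈ I) ∧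
    ∀ a ∈ I, ∀ b ∈ I, Compat a b → a ⊔ b ∈ I

/-- The relation `ε_I`: `a ε_I b` iff there is `c ≤ a, b` with
`a \ c, b \ c ∈ I`. -/
def epsI {S : Type*} [Mul S] [SDiff S] (I : Set S) (a b : S) : Prop :=
  ∃ c : S, natLe c a ∧ natLe c b ∧ (a \ c) ∈ I ∧ (b \ c) ∈ I

/-- The natural partial order on the quotient `S/ε_I`:
`[x] ≤ [y]` iff some `x'` with `x ε_I x'` satisfies `x' ≤ y`. -/
def qle {S : Type*} [Mul S] [SDiff S] (I : Set S) (x y : S) : Prop :=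
  ∃ x' : S, epsI I x x' ∧ natLe x' y

/-! Write `d(x) = x⁻¹x`. If `c ≤ a` with `a \ c ∈ I`, then `a = c ⊔ (a \ c)`, and distributivity
gives `ab = cb ⊔ (a \ c)b` with `(a \ c)b ∈ I`, so `ε_I` is compatible with multiplication on
either side. For transitivity, let `p` witness `a ε_I b` and `q` witness `b ε_I c`; their meet
`m = p·d(q) = q·d(p)` below `b` witnesses `a ε_I c`. Indeed `p \ m` has domain orthogonal to
`d(q)`, hence lies below `b \ q ∈ I`, and `a \ m` is covered by `p \ m` and `a \ p`.
Weak meet preservation follows because the witness of `t₁ ε_I t₂` lies below both `t₁` and `t₂`. -/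

namespace InvSemigroupZero

variable {S : Type*} [Mul S] [Inv S] [Zero S]

-- Made a local instance in proofs, so that `grind` works modulo associativity.
theorem associative (h : InvSemigroupZero S) : Std.Associative (α := S) (· * ·) :=
  ⟨h.mul_assoc⟩

theorem inv_inv (h : InvSemigroupZero S) (a : S) : a⁻¹⁻¹ = a :=
  (h.inv_unique a⁻¹ a (h.inv_mul_inv a) (h.mul_inv_mul a)).symm

theorem inv_eq_self_of_isIdem (h : InvSemigroupZero S) {e : S} (he : IsIdem e) : e⁻¹ = e :=
  (h.inv_unique e e (by rw [he, he]) (by rw [he, he])).symm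

theorem isIdem_mul (h : InvSemigroupZero S) {e f : S} (he : IsIdem e) (hf : IsIdem f) :
    IsIdem (e * f) := by
  have := h.associative
  unfold IsIdem at *
  set x := (e * f)⁻¹
  have hef := h.mul_inv_mul (e * f)
  have hx := h.inv_mul_inv (e * f)
  -- `f x e` is also an inverse of `e f`, so it equals `x`, which is thereby idempotent
  have hfxe : f * x * e = x := h.inv_unique (e * f) _ (by grind) (by grind)
  have hxx : x * x = x := by grind
  rw [← h.inv_inv (e * f), h.inv_eq_self_of_isIdem hxx, hxx]

theorem idem_comm (h : InvSemigroupZero S) {e f : S} (he : IsIdem e) (hf : IsIdem f) :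
    e * f = f * e := by
  have := h.associative
  have hef := h.isIdem_mul he hf
  have hfe := h.isIdem_mul hf he
  unfold IsIdem at *
  rw [← h.inv_eq_self_of_isIdem hef]
  exact (h.inv_unique (e * f) (f * e) (by grind) (by grind)).symm

theorem isIdem_dd (h : InvSemigroupZero S) (a : S) : IsIdem (dd a) := by
  rw [IsIdem, dd, ← h.mul_assoc, h.inv_mul_inv]

theorem isIdem_rr (h : InvSemigroupZero S) (a : S) : IsIdem (rr a) := by
  rw [IsIdem, rr, ← h.mul_assoc, h.mul_inv_mul]

theorem mul_dd (h : InvSemigroupZero S) (a : S) : a * dd a = a := by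
  rw [dd, ← h.mul_assoc, h.mul_inv_mul]

theorem mul_eq_zero_of_dd_mul_eq_zero (h : InvSemigroupZero S) {c e : S} (hc : dd c * e = 0) :
    c * e = 0 := by
  rw [← h.mul_dd c, h.mul_assoc, hc, h.mul_zero]

theorem mul_inv_rev (h : InvSemigroupZero S) (a b : S) : (a * b)⁻¹ = b⁻¹ * a⁻¹ := by
  have := h.associative
  have hab := h.idem_comm (h.isIdem_rr b) (h.isIdem_dd a)
  have ha := h.mul_inv_mul a
  have hb := h.mul_inv_mul b
  have ha' := h.inv_mul_inv a
  have hb' := h.inv_mul_inv b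
  unfold rr dd at hab
  exact (h.inv_unique (a * b) _ (by grind) (by grind)).symm

theorem isIdem_inv_mul_mul (h : InvSemigroupZero S) {e : S} (he : IsIdem e) (x : S) :
    IsIdem (x⁻¹ * e * x) := by
  have := h.associative
  have hex := h.idem_comm he (h.isIdem_rr x)
  have hx := h.inv_mul_inv x
  unfold IsIdem rr at *
  grind

theorem dd_mul_of_isIdem (h : InvSemigroupZero S) {e : S} (he : IsIdem e) (a : S) :
    dd (a * e) = dd a * e := by
  have := h.associative
  have hea := h.idem_comm he (h.isIdem_dd a)
  unfold IsIdem dd at *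
  rw [h.mul_inv_rev, h.inv_eq_self_of_isIdem he]
  grind

theorem natLe_refl (h : InvSemigroupZero S) (a : S) : natLe a a :=
  ⟨dd a, h.isIdem_dd a, (h.mul_dd a).symm⟩

theorem natLe_trans (h : InvSemigroupZero S) {s t u : S} (hst : natLe s t) (htu : natLe t u) :
    natLe s u := by
  obtain ⟨e, he, rfl⟩ := hst
  obtain ⟨f, hf, rfl⟩ := htu
  exact ⟨f * e, h.isIdem_mul hf he, h.mul_assoc u f e⟩

theorem natLe_zero (h : InvSemigroupZero S) (t : S) : natLe 0 t :=
  ⟨0, h.zero_mul 0, (h.mul_zero t).symm⟩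

theorem eq_zero_of_natLe_zero (h : InvSemigroupZero S) {c : S} (hc : natLe c 0) : c = 0 := by
  obtain ⟨e, -, rfl⟩ := hc
  exact h.zero_mul e

theorem eq_mul_dd_of_natLe (h : InvSemigroupZero S) {s t : S} (hst : natLe s t) :
    s = t * dd s := by
  obtain ⟨e, he, rfl⟩ := hst
  rw [h.dd_mul_of_isIdem he, ← h.mul_assoc, h.mul_dd]

theorem dd_mul_dd_of_natLe (h : InvSemigroupZero S) {s t : S} (hst : natLe s t) :
    dd t * dd s = dd s := by
  obtain ⟨e, he, rfl⟩ := hst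
  rw [h.dd_mul_of_isIdem he, ← h.mul_assoc, h.isIdem_dd t]

theorem natLe_antisymm (h : InvSemigroupZero S) {s t : S} (hst : natLe s t) (hts : natLe t s) :
    s = t := by
  have hdd : dd s = dd t :=
    calc dd s = dd t * dd s := (h.dd_mul_dd_of_natLe hst).symm
      _ = dd s * dd t := h.idem_comm (h.isIdem_dd t) (h.isIdem_dd s)
      _ = dd t := h.dd_mul_dd_of_natLe hts
  rw [h.eq_mul_dd_of_natLe hst, hdd, h.mul_dd]

theorem natLe_mul_left (h : InvSemigroupZero S) (x : S) {s t : S} (hst : natLe s t) :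
    natLe (x * s) (x * t) := by
  obtain ⟨e, he, rfl⟩ := hst
  exact ⟨e, he, (h.mul_assoc x t e).symm⟩

theorem natLe_mul_right (h : InvSemigroupZero S) (x : S) {s t : S} (hst : natLe s t) :
    natLe (s * x) (t * x) := by
  have := h.associative
  obtain ⟨e, he, rfl⟩ := hst
  have hex := h.idem_comm he (h.isIdem_rr x)
  have hx := h.mul_inv_mul x
  unfold rr at hex
  exact ⟨x⁻¹ * e * x, h.isIdem_inv_mul_mul he x, by grind⟩

theorem mul_dd_comm_of_natLe (h : InvSemigroupZero S) {p q b : S} (hpb : natLe p b)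
    (hqb : natLe q b) : p * dd q = q * dd p :=
  calc p * dd q = b * dd p * dd q := by rw [← h.eq_mul_dd_of_natLe hpb]
    _ = b * dd q * dd p := by
      rw [h.mul_assoc, h.idem_comm (h.isIdem_dd p) (h.isIdem_dd q), ← h.mul_assoc]
    _ = q * dd p := by rw [← h.eq_mul_dd_of_natLe hqb]

theorem compat_of_natLe (h : InvSemigroupZero S) {a b u : S} (hau : natLe a u)
    (hbu : natLe b u) : Compat a b := by
  have := h.associative
  obtain ⟨e, he, rfl⟩ := hau
  obtain ⟨f, hf, rfl⟩ := hbu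
  constructor
  · rw [h.mul_inv_rev, h.inv_eq_self_of_isIdem he]
    have hedf := h.isIdem_mul he (h.isIdem_mul (h.isIdem_dd u) hf)
    unfold dd at hedf
    grind
  · rw [h.mul_inv_rev, h.inv_eq_self_of_isIdem hf]
    have hconj := h.isIdem_inv_mul_mul (h.isIdem_mul he hf) u⁻¹
    rw [h.inv_inv] at hconj
    grind

end InvSemigroupZero

namespace BooleanInvSemigroup

variable {S : Type*} [Mul S] [Inv S] [Zero S] [Max S] [SDiff S]

theorem zero_sup (hS : BooleanInvSemigroup S) (z : S) : 0 ⊔ z = z := by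
  have h0z : Compat 0 z := hS.1.compat_of_natLe (hS.1.natLe_zero z) (hS.1.natLe_refl z)
  exact hS.1.natLe_antisymm (hS.sup_le 0 z z h0z (hS.1.natLe_zero z) (hS.1.natLe_refl z))
    (hS.le_sup_right 0 z h0z)

theorem sup_mul_eq_of_mul_eq_zero (hS : BooleanInvSemigroup S) {c x e : S} (hcx : Compat c x)
    (hce : c * e = 0) : (c ⊔ x) * e = x * e := by
  rw [hS.sup_mul c x e hcx, hce, hS.zero_sup]

theorem sdiff_zero (hS : BooleanInvSemigroup S) (a : S) : a \ 0 = a := by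
  simpa only [hS.zero_sup] using hS.sup_sdiff a 0 (hS.1.natLe_zero a)

theorem dd_mul_dd_sdiff (hS : BooleanInvSemigroup S) {a c : S} (hca : natLe c a) :
    dd c * dd (a \ c) = 0 := by
  rw [dd, dd, hS.1.mul_assoc, ← hS.1.mul_assoc c, (hS.sdiff_orth a c hca).2, hS.1.zero_mul,
    hS.1.mul_zero]

theorem sdiff_self (hS : BooleanInvSemigroup S) (a : S) : a \ a = 0 := by
  have haa := hS.1.natLe_refl a
  rw [hS.1.eq_mul_dd_of_natLe (hS.sdiff_le a a haa)]
  exact hS.1.mul_eq_zero_of_dd_mul_eq_zero (hS.dd_mul_dd_sdiff haa)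

theorem sdiff_sup_natLe (hS : BooleanInvSemigroup S) {c x : S} (hcx : Compat c x) :
    natLe ((c ⊔ x) \ c) x := by
  have hc := hS.le_sup_left c x hcx
  rw [hS.1.eq_mul_dd_of_natLe (hS.sdiff_le _ c hc), hS.sup_mul_eq_of_mul_eq_zero hcx
    (hS.1.mul_eq_zero_of_dd_mul_eq_zero (hS.dd_mul_dd_sdiff hc))]
  exact ⟨_, hS.1.isIdem_dd _, rfl⟩

theorem natLe_sdiff_of_dd_mul_dd_eq_zero (hS : BooleanInvSemigroup S) {z q b : S}
    (hzb : natLe z b) (hqb : natLe q b) (hqz : dd q * dd z = 0) : natLe z (b \ q) := by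
  have hq : Compat q (b \ q) := hS.1.compat_of_natLe hqb (hS.sdiff_le b q hqb)
  refine ⟨dd z, hS.1.isIdem_dd z, ?_⟩
  calc z = b * dd z := hS.1.eq_mul_dd_of_natLe hzb
    _ = (q ⊔ b \ q) * dd z := by rw [hS.sup_sdiff b q hqb]
    _ = b \ q * dd z := hS.sup_mul_eq_of_mul_eq_zero hq (hS.1.mul_eq_zero_of_dd_mul_eq_zero hqz)

end BooleanInvSemigroup

namespace AddIdeal

variable {S : Type*} [Mul S] [Inv S] [Max S] {I : Set S}

theorem mul_mem_left (hI : AddIdeal I) {a : S} (ha : a ∈ I) (s : S) : s * a ∈ I :=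
  (hI.2.1 a ha s).1

theorem mul_mem_right (hI : AddIdeal I) {a : S} (ha : a ∈ I) (s : S) : a * s ∈ I :=
  (hI.2.1 a ha s).2

theorem sup_mem (hI : AddIdeal I) {a b : S} (ha : a ∈ I) (hb : b ∈ I) (hab : Compat a b) :
    a ⊔ b ∈ I :=
  hI.2.2 a ha b hb hab

theorem mem_of_natLe (hI : AddIdeal I) {x y : S} (hxy : natLe x y) (hy : y ∈ I) : x ∈ I := by
  obtain ⟨e, -, rfl⟩ := hxy
  exact hI.mul_mem_right hy e

variable [Zero S] [SDiff S]

theorem sdiff_self_mem (hS : BooleanInvSemigroup S) (hI : AddIdeal I) (a : S) : a \ a ∈ I := by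
  obtain ⟨x, hx⟩ := hI.1
  rw [hS.sdiff_self, ← hS.1.mul_zero x]
  exact hI.mul_mem_right hx 0

theorem sdiff_mem_trans (hS : BooleanInvSemigroup S) (hI : AddIdeal I) {m p a : S}
    (hmp : natLe m p) (hpa : natLe p a) (hpm : p \ m ∈ I) (hap : a \ p ∈ I) : a \ m ∈ I := by
  set z := a \ m
  have hma := hS.1.natLe_trans hmp hpa
  -- the part of `z` under `p` is orthogonal to `m`; the rest lies under `a \ p`
  have hpz : natLe (p * dd z) (p \ m) := by
    refine hS.natLe_sdiff_of_dd_mul_dd_eq_zero ⟨_, hS.1.isIdem_dd z, rfl⟩ hmp ?_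
    rw [hS.1.dd_mul_of_isIdem (hS.1.isIdem_dd z), ← hS.1.mul_assoc,
      hS.1.idem_comm (hS.1.isIdem_dd m) (hS.1.isIdem_dd p), hS.1.mul_assoc,
      hS.dd_mul_dd_sdiff hma, hS.1.mul_zero]
  have hp : Compat p (a \ p) := hS.1.compat_of_natLe hpa (hS.sdiff_le a p hpa)
  have hz : z = p * dd z ⊔ a \ p * dd z := by
    rw [← hS.sup_mul _ _ _ hp, hS.sup_sdiff a p hpa]
    exact hS.1.eq_mul_dd_of_natLe (hS.sdiff_le a m hma)
  rw [hz]
  exact hI.sup_mem (hI.mem_of_natLe hpz hpm) (hI.mul_mem_right hap _)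
    (hS.1.compat_of_natLe (hS.1.natLe_trans ⟨_, hS.1.isIdem_dd z, rfl⟩ hpa)
      (hS.1.natLe_trans ⟨_, hS.1.isIdem_dd z, rfl⟩ (hS.sdiff_le a p hpa)))

theorem sdiff_mul_dd_mem (hS : BooleanInvSemigroup S) (hI : AddIdeal I) {p q b : S}
    (hpb : natLe p b) (hqb : natLe q b) (hbq : b \ q ∈ I) : p \ (p * dd q) ∈ I := by
  set m := p * dd q
  have hmp : natLe m p := ⟨_, hS.1.isIdem_dd q, rfl⟩
  have hpm := hS.sdiff_le p m hmp
  refine hI.mem_of_natLe (hS.natLe_sdiff_of_dd_mul_dd_eq_zero (hS.1.natLe_trans hpm hpb) hqb ?_)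
    hbq
  calc dd q * dd (p \ m) = dd q * (dd p * dd (p \ m)) := by rw [hS.1.dd_mul_dd_of_natLe hpm]
    _ = dd m * dd (p \ m) := by
      rw [← hS.1.mul_assoc, hS.1.idem_comm (hS.1.isIdem_dd q) (hS.1.isIdem_dd p),
        ← hS.1.dd_mul_of_isIdem (hS.1.isIdem_dd q)]
    _ = 0 := hS.dd_mul_dd_sdiff hmp

theorem sdiff_mul_right_mem (hS : BooleanInvSemigroup S) (hI : AddIdeal I) {a c : S}
    (hca : natLe c a) (hac : a \ c ∈ I) (b : S) : (a * b) \ (c * b) ∈ I := by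
  have hc : Compat c (a \ c) := hS.1.compat_of_natLe hca (hS.sdiff_le a c hca)
  have hcb : Compat (c * b) (a \ c * b) := hS.1.compat_of_natLe (hS.1.natLe_mul_right b hca)
    (hS.1.natLe_mul_right b (hS.sdiff_le a c hca))
  have hle := hS.sdiff_sup_natLe hcb
  rw [← hS.sup_mul _ _ _ hc, hS.sup_sdiff a c hca] at hle
  exact hI.mem_of_natLe hle (hI.mul_mem_right hac b)

theorem sdiff_mul_left_mem (hS : BooleanInvSemigroup S) (hI : AddIdeal I) {a c : S}
    (hca : natLe c a) (hac : a \ c ∈ I) (b : S) : (b * a) \ (b * c) ∈ I := by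
  have hc : Compat c (a \ c) := hS.1.compat_of_natLe hca (hS.sdiff_le a c hca)
  have hbc : Compat (b * c) (b * (a \ c)) := hS.1.compat_of_natLe (hS.1.natLe_mul_left b hca)
    (hS.1.natLe_mul_left b (hS.sdiff_le a c hca))
  have hle := hS.sdiff_sup_natLe hbc
  rw [← hS.mul_sup _ _ _ hc, hS.sup_sdiff a c hca] at hle
  exact hI.mem_of_natLe hle (hI.mul_mem_left hac b)

end AddIdeal

theorem epsI_symm {S : Type*} [Mul S] [SDiff S] {I : Set S} {a b : S} (h : epsI I a b) :
    epsI I b a :=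
  let ⟨c, hca, hcb, hac, hbc⟩ := h
  ⟨c, hcb, hca, hbc, hac⟩

section epsI

variable {S : Type*} [Mul S] [Inv S] [Zero S] [Max S] [SDiff S] {I : Set S}

theorem epsI_of_natLe (hS : BooleanInvSemigroup S) (hI : AddIdeal I) {a m : S}
    (hma : natLe m a) (ham : a \ m ∈ I) : epsI I a m :=
  ⟨m, hma, hS.1.natLe_refl m, ham, hI.sdiff_self_mem hS m⟩

theorem epsI_refl (hS : BooleanInvSemigroup S) (hI : AddIdeal I) (a : S) : epsI I a a :=
  epsI_of_natLe hS hI (hS.1.natLe_refl a) (hI.sdiff_self_mem hS a)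

theorem epsI_trans (hS : BooleanInvSemigroup S) (hI : AddIdeal I) {a b c : S}
    (hab : epsI I a b) (hbc : epsI I b c) : epsI I a c := by
  obtain ⟨p, hpa, hpb, hap, hbp⟩ := hab
  obtain ⟨q, hqb, hqc, hbq, hcq⟩ := hbc
  have hm : p * dd q = q * dd p := hS.1.mul_dd_comm_of_natLe hpb hqb
  have hmp : natLe (p * dd q) p := ⟨_, hS.1.isIdem_dd q, rfl⟩
  have hmq : natLe (p * dd q) q := hm ▸ ⟨_, hS.1.isIdem_dd p, rfl⟩
  refine ⟨p * dd q, hS.1.natLe_trans hmp hpa, hS.1.natLe_trans hmq hqc,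
    hI.sdiff_mem_trans hS hmp hpa (hI.sdiff_mul_dd_mem hS hpb hqb hbq) hap,
    hI.sdiff_mem_trans hS hmq hqc ?_ hcq⟩
  rw [hm]
  exact hI.sdiff_mul_dd_mem hS hqb hpb hbp

theorem epsI_mul_right (hS : BooleanInvSemigroup S) (hI : AddIdeal I) {a a' : S}
    (h : epsI I a a') (b : S) : epsI I (a * b) (a' * b) :=
  let ⟨c, hca, hca', hac, ha'c⟩ := h
  ⟨c * b, hS.1.natLe_mul_right b hca, hS.1.natLe_mul_right b hca',
    hI.sdiff_mul_right_mem hS hca hac b, hI.sdiff_mul_right_mem hS hca' ha'c b⟩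

theorem epsI_mul_left (hS : BooleanInvSemigroup S) (hI : AddIdeal I) {b b' : S}
    (h : epsI I b b') (a : S) : epsI I (a * b) (a * b') :=
  let ⟨d, hdb, hdb', hbd, hb'd⟩ := h
  ⟨a * d, hS.1.natLe_mul_left a hdb, hS.1.natLe_mul_left a hdb',
    hI.sdiff_mul_left_mem hS hdb hbd a, hI.sdiff_mul_left_mem hS hdb' hb'd a⟩

theorem epsI_mul (hS : BooleanInvSemigroup S) (hI : AddIdeal I) {a a' b b' : S}
    (ha : epsI I a a') (hb : epsI I b b') : epsI I (a * b) (a' * b') :=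
  epsI_trans hS hI (epsI_mul_right hS hI ha b) (epsI_mul_left hS hI hb a')

theorem setOf_epsI_zero (hS : BooleanInvSemigroup S) (hI : AddIdeal I) :
    {a : S | epsI I a 0} = I := by
  ext a
  constructor
  · rintro ⟨c, -, hc0, hac, -⟩
    rwa [hS.1.eq_zero_of_natLe_zero hc0, hS.sdiff_zero] at hac
  · intro ha
    exact epsI_of_natLe hS hI (hS.1.natLe_zero a) (by rwa [hS.sdiff_zero])

theorem exists_natLe_natLe_qle (hS : BooleanInvSemigroup S) (hI : AddIdeal I) {a b t : S}
    (hta : qle I t a) (htb : qle I t b) : ∃ c, natLe c a ∧ natLe c b ∧ qle I t c := by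
  obtain ⟨t₁, htt₁, ht₁a⟩ := hta
  obtain ⟨t₂, htt₂, ht₂b⟩ := htb
  obtain ⟨m, hm₁, hm₂, ht₁m, -⟩ := epsI_trans hS hI (epsI_symm htt₁) htt₂
  exact ⟨m, hS.1.natLe_trans hm₁ ht₁a, hS.1.natLe_trans hm₂ ht₂b,
    m, epsI_trans hS hI htt₁ (epsI_of_natLe hS hI hm₁ ht₁m), hS.1.natLe_refl m⟩

end epsI

/-- For an additive ideal `I`, `ε_I` is a congruence whose class of `0` is
exactly `I`, and the quotient map `S → S/ε_I` is weakly meet preserving. -/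
theorem epsI_congruence_and_weakly_meet_preserving {S : Type*}
    [Mul S] [Inv S] [Zero S] [Max S] [SDiff S]
    (hS : BooleanInvSemigroup S) (I : Set S) (hI : AddIdeal I) :
    Equivalence (epsI I) ∧
    (∀ a a' b b' : S, epsI I a a' → epsI I b b' → epsI I (a * b) (a' * b')) ∧
    {a : S | epsI I a 0} = I ∧
    (∀ a b t : S, qle I t a → qle I t b →
      ∃ c : S, natLe c a ∧ natLe c b ∧ qle I t c) :=
  ⟨⟨epsI_refl hS hI, epsI_symm, epsI_trans hS hI⟩, fun _ _ _ _ => epsI_mul hS hI,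
    setOf_epsI_zero hS hI, fun _ _ _ => exists_natLe_natLe_qle hS hI⟩
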